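/- arXiv:1905.01423 — 3 statements merged into one kernel-verified Lean document; each statement's English description precedes it below -/
import Mathlib

section
/- Let k, M be positive integers with gcd(k, M) = g, and let χ be a nonprincipal Dirichlet character of modulus k. Then for all real x < y, |∑_{x < n ≤ y, gcd(n,M)=1} χ(n)| ≤ 2^(ω(M) - ω(g)) · ((1/(3 log 3))·√k·log k + (13/2)·√k), where ω(n) denotes the number of distinct prime divisors of n. -/
/-!
Detect coprimality to `M` by Möbius inversion over the divisors of `M`: the restricted sum over
`(x, y]` becomes `∑_{d ∣ M} μ(d) χ(d) ∑_{x/d < m ≤ y/d} χ(m)`. Only squarefree `d` coprime to `k`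
contribute, each by at most the Pólya–Vinogradov bound, and such a `d` is determined by its set of
prime factors, a subset of the primes dividing `M` but not `gcd(k, M)`.
-/

open Finset ArithmeticFunction
open scoped ArithmeticFunction.Moebius

lemma mem_Icc_floor_add_one_floor_iff {x y : ℝ} {a : ℤ} :
    a ∈ Icc (⌊x⌋ + 1) ⌊y⌋ ↔ x < a ∧ a ≤ y := by
  simp [Int.floor_lt, Int.le_floor]

lemma sum_Icc_floor_ite_dvd {A : Type*} [AddCommMonoid A] (f : ℤ → A) {d : ℕ} (hd : 0 < d)
    (x y : ℝ) :
    ∑ n ∈ Icc (⌊x⌋ + 1) ⌊y⌋, (if (d : ℤ) ∣ n then f n else 0) =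
      ∑ m ∈ Icc (⌊x / d⌋ + 1) ⌊y / d⌋, f (d * m) := by
  have hd' : (0 : ℝ) < d := by exact_mod_cast hd
  have mem_iff (m : ℤ) : m ∈ Icc (⌊x / d⌋ + 1) ⌊y / d⌋ ↔ d * m ∈ Icc (⌊x⌋ + 1) ⌊y⌋ := by
    rw [mem_Icc_floor_add_one_floor_iff, mem_Icc_floor_add_one_floor_iff, div_lt_iff₀ hd',
      le_div_iff₀ hd']
    push_cast
    rw [mul_comm]
  rw [← sum_filter]
  symm
  refine sum_nbij' (d * ·) (· / d) (fun m hm ↦ ?_) (fun n hn ↦ ?_) (fun m _ ↦ ?_)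
    (fun n hn ↦ ?_) (fun _ _ ↦ rfl)
  · simp only [mem_filter, dvd_mul_right, and_true] at hm ⊢
    exact (mem_iff m).1 hm
  · simp only [mem_filter] at hn ⊢
    rw [mem_iff, Int.mul_ediv_cancel' hn.2]
    exact hn.1
  · exact Int.mul_ediv_cancel_left m (by omega)
  · simp only [mem_filter] at hn
    exact Int.mul_ediv_cancel' hn.2

lemma sum_moebius_divisors_filter_dvd {R : Type*} [Ring R] {M : ℕ} (hM : M ≠ 0) (n : ℤ) :
    ∑ d ∈ M.divisors with ((d : ℕ) : ℤ) ∣ n, (μ d : R) =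
      if Int.gcd n M = 1 then 1 else 0 := by
  have hfilter : {d ∈ M.divisors | ((d : ℕ) : ℤ) ∣ n} = (Int.gcd n M).divisors := by
    rw [← Nat.divisors_filter_dvd_of_dvd hM (Int.natCast_dvd_natCast.1 (Int.gcd_dvd_right n M))]
    refine filter_congr fun d hd ↦ ?_
    rw [Int.natCast_dvd, Int.gcd, Int.natAbs_natCast, Nat.dvd_gcd_iff,
      and_iff_left (Nat.dvd_of_mem_divisors hd)]
  simp_rw [hfilter, ← intCoe_apply]
  rw [← coe_mul_zeta_apply, coe_moebius_mul_coe_zeta, one_apply]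

lemma ite_gcd_eq_one_eq_sum_moebius {R : Type*} [Ring R] {M : ℕ} (hM : M ≠ 0) (f : ℤ → R)
    (n : ℤ) :
    (if Int.gcd n M = 1 then f n else 0) =
      ∑ d ∈ M.divisors, (μ d : R) * if (d : ℤ) ∣ n then f n else 0 := by
  simp_rw [mul_ite, mul_zero]
  rw [← sum_filter, ← sum_mul, sum_moebius_divisors_filter_dvd hM, ite_mul, one_mul, zero_mul]

lemma card_filter_squarefree_coprime_divisors_le {M : ℕ} (hM : M ≠ 0) (k : ℕ) :
    #{d ∈ M.divisors | Squarefree d ∧ d.Coprime k} ≤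
      2 ^ (#M.primeFactors - #(k.gcd M).primeFactors) := by
  have hsub : (k.gcd M).primeFactors ⊆ M.primeFactors :=
    Nat.primeFactors_mono (Nat.gcd_dvd_right k M) hM
  rw [← card_sdiff_of_subset hsub, ← card_powerset]
  refine card_le_card_of_injOn Nat.primeFactors (fun d hd ↦ ?_) (fun d₁ hd₁ d₂ hd₂ h ↦ ?_)
  · simp only [coe_filter, mem_coe, mem_powerset, Nat.mem_divisors] at hd ⊢
    intro p hp
    obtain ⟨hp, hpd, -⟩ := Nat.mem_primeFactors.1 hp
    refine mem_sdiff.2 ⟨Nat.mem_primeFactors.2 ⟨hp, hpd.trans hd.1.1, hM⟩, fun hpg ↦ ?_⟩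
    exact hp.ne_one (Nat.eq_one_of_dvd_coprimes hd.2.2 hpd
      ((Nat.dvd_of_mem_primeFactors hpg).trans (Nat.gcd_dvd_left k M)))
  · simp only [coe_filter, Set.mem_ofPred_eq] at hd₁ hd₂
    rw [← Nat.prod_primeFactors_of_squarefree hd₁.2.1,
      ← Nat.prod_primeFactors_of_squarefree hd₂.2.1, h]

namespace DirichletCharacter

variable {k : ℕ} (χ : DirichletCharacter ℂ k)

lemma norm_moebius_mul_le (d : ℕ) :
    ‖(μ d : ℂ) * χ d‖ ≤ if Squarefree d ∧ d.Coprime k then 1 else 0 := by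
  split_ifs with hd
  · rw [norm_mul, Complex.norm_intCast]
    exact mul_le_one₀ (mod_cast abs_moebius_le_one) (norm_nonneg _) (χ.norm_le_one d)
  · rcases not_and_or.1 hd with hsq | hcop
    · simp [moebius_eq_zero_of_not_squarefree hsq]
    · simp [χ.map_nonunit (mt (ZMod.isUnit_iff_coprime d k).1 hcop)]

lemma sum_Icc_floor_ite_dvd_eq_mul {d : ℕ} (hd : 0 < d) (x y : ℝ) :
    ∑ n ∈ Icc (⌊x⌋ + 1) ⌊y⌋, (if (d : ℤ) ∣ n then χ n else 0) =
      χ d * ∑ m ∈ Icc (⌊x / d⌋ + 1) ⌊y / d⌋, χ m := by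
  rw [sum_Icc_floor_ite_dvd _ hd, mul_sum]
  push_cast
  exact sum_congr rfl fun m _ ↦ map_mul χ _ _

lemma sum_Icc_floor_ite_gcd_eq_one {M : ℕ} (hM : M ≠ 0) (x y : ℝ) :
    ∑ n ∈ Icc (⌊x⌋ + 1) ⌊y⌋, (if Int.gcd n M = 1 then χ n else 0) =
      ∑ d ∈ M.divisors, (μ d : ℂ) * χ d * ∑ m ∈ Icc (⌊x / d⌋ + 1) ⌊y / d⌋, χ m := by
  rw [sum_congr rfl fun n _ ↦ ite_gcd_eq_one_eq_sum_moebius hM (fun n : ℤ ↦ χ n) n,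
    sum_comm]
  refine sum_congr rfl fun d hd ↦ ?_
  rw [← mul_sum, χ.sum_Icc_floor_ite_dvd_eq_mul (Nat.pos_of_mem_divisors hd), mul_assoc]

theorem norm_sum_Icc_floor_ite_gcd_eq_one_le {M : ℕ} (hM : M ≠ 0) {B : ℝ}
    (hB : ∀ x y : ℝ, x < y → ‖∑ n ∈ Icc (⌊x⌋ + 1) ⌊y⌋, χ n‖ ≤ B) {x y : ℝ} (hxy : x < y) :
    ‖∑ n ∈ Icc (⌊x⌋ + 1) ⌊y⌋, (if Int.gcd n M = 1 then χ n else 0)‖ ≤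
      #{d ∈ M.divisors | Squarefree d ∧ d.Coprime k} * B := by
  rw [χ.sum_Icc_floor_ite_gcd_eq_one hM]
  calc _ ≤ ∑ d ∈ M.divisors,
          ‖(μ d : ℂ) * χ d‖ * ‖∑ m ∈ Icc (⌊x / d⌋ + 1) ⌊y / d⌋, χ m‖ :=
        norm_sum_le_of_le _ fun d _ ↦ norm_mul_le _ _
    _ ≤ ∑ d ∈ M.divisors, (if Squarefree d ∧ d.Coprime k then 1 else 0) * B := by
        refine sum_le_sum fun d hd ↦ ?_
        have hd' : (0 : ℝ) < d := mod_cast Nat.pos_of_mem_divisors hd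
        gcongr
        · exact χ.norm_moebius_mul_le d
        · exact hB _ _ (div_lt_div_of_pos_right hxy hd')
    _ = _ := by rw [← sum_mul, sum_boole]

end DirichletCharacter

theorem char_sum_coprime_bound_general (k M : ℕ) (hM : 0 < M)
    (χ : DirichletCharacter ℂ k)
    (hPV : ∀ x y : ℝ, x < y →
      ‖∑ n ∈ Finset.Icc (⌊x⌋ + 1) ⌊y⌋, χ (n : ZMod k)‖ ≤
        1 / (3 * Real.log 3) * Real.sqrt k * Real.log k + 13 / 2 * Real.sqrt k) :
    ∀ x y : ℝ, x < y →
      ‖∑ n ∈ Finset.Icc (⌊x⌋ + 1) ⌊y⌋,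
          if Int.gcd n M = 1 then χ (n : ZMod k) else 0‖ ≤
        (2 : ℝ) ^ (M.primeFactors.card - (Nat.gcd k M).primeFactors.card) *
          (1 / (3 * Real.log 3) * Real.sqrt k * Real.log k + 13 / 2 * Real.sqrt k) := by
  intro x y hxy
  have hB : 0 ≤ 1 / (3 * Real.log 3) * Real.sqrt k * Real.log k + 13 / 2 * Real.sqrt k :=
    (norm_nonneg _).trans (hPV 0 1 one_pos)
  calc _ ≤ _ := χ.norm_sum_Icc_floor_ite_gcd_eq_one_le hM.ne' hPV hxy
    _ ≤ _ := by
        gcongr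
        exact_mod_cast card_filter_squarefree_coprime_divisors_le hM.ne' k

/-- Pólya–Vinogradov type bound for character sums restricted to integers coprime to `M`. -/
theorem char_sum_coprime_bound (k M : ℕ) (hk : 0 < k) (hM : 0 < M)
    (χ : DirichletCharacter ℂ k) (hχ : χ ≠ 1)
    (hPV : ∀ x y : ℝ, x < y →
      ‖∑ n ∈ Finset.Icc (⌊x⌋ + 1) ⌊y⌋, χ (n : ZMod k)‖ ≤
        1 / (3 * Real.log 3) * Real.sqrt k * Real.log k + 13 / 2 * Real.sqrt k) :
    ∀ x y : ℝ, x < y →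
      ‖∑ n ∈ Finset.Icc (⌊x⌋ + 1) ⌊y⌋,
          if Int.gcd n M = 1 then χ (n : ZMod k) else 0‖ ≤
        (2 : ℝ) ^ (M.primeFactors.card - (Nat.gcd k M).primeFactors.card) *
          (1 / (3 * Real.log 3) * Real.sqrt k * Real.log k + 13 / 2 * Real.sqrt k) :=
  char_sum_coprime_bound_general k M hM χ hPV
end

section
/- For every integer n ≥ 11, 2^(log n / log(log n) + 1.45743·log n/(log(log n))²) ≤ 123·n^(211/1400). -/
open Real

/-- Taylor upper bound on `exp` of degree 4. -/
lemma expP {t : ℝ} (h1 : 0 ≤ t) (h2 : t ≤ 1) :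
    Real.exp t ≤ 1 + t + t^2/2 + t^3/6 + 5*t^4/96 := by
  have h := Real.exp_bound' h1 h2 (n := 4) (by norm_num)
  have he : (∑ m ∈ Finset.range 4, t ^ m / m.factorial) + t ^ 4 * (4+1) / (Nat.factorial 4 * 4)
      = 1 + t + t^2/2 + t^3/6 + 5*t^4/96 := by
    simp [Finset.sum_range_succ, Nat.factorial]
    ring
  calc Real.exp t ≤ _ := h
    _ = _ := he

/-- Taylor upper bound on `exp` of degree 7. -/
lemma expT {t : ℝ} (h1 : 0 ≤ t) (h2 : t ≤ 1) :
    Real.exp t ≤ 1 + t + t^2/2 + t^3/6 + t^4/24 + t^5/120 + t^6/720 + t^7/4410 := by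
  have h := Real.exp_bound' h1 h2 (n := 7) (by norm_num)
  have he : (∑ m ∈ Finset.range 7, t ^ m / m.factorial) + t ^ 7 * (7+1) / (Nat.factorial 7 * 7)
      = 1 + t + t^2/2 + t^3/6 + t^4/24 + t^5/120 + t^6/720 + t^7/4410 := by
    simp [Finset.sum_range_succ, Nat.factorial]
    ring
  calc Real.exp t ≤ _ := h
    _ = _ := he

lemma exp_quarter : Real.exp (1/4) ≤ 1.2840255 := by
  have h := expT (t := 1/4) (by norm_num) (by norm_num)
  norm_num at h ⊢
  linarith

lemma exp_qk (k : ℕ) : Real.exp ((k : ℝ)/4) ≤ 1.2840255 ^ k := by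
  have h : ((k : ℝ)/4) = (k : ℕ) * ((1:ℝ)/4) := by ring
  rw [h, Real.exp_nat_mul]
  exact pow_le_pow_left₀ (Real.exp_pos _).le exp_quarter k

lemma exp087 : Real.exp 0.87 ≤ 2.38691092 := by
  have h : Real.exp 0.87 = Real.exp 0.29 ^ 3 := by
    rw [← Real.exp_nat_mul]; norm_num
  have h1 : Real.exp 0.29 ≤ 1.3364275 := by
    have h2 := expT (t := 0.29) (by norm_num) (by norm_num)
    norm_num at h2 ⊢
    linarith
  rw [h]
  calc Real.exp 0.29 ^ 3 ≤ 1.3364275 ^ 3 :=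
        pow_le_pow_left₀ (Real.exp_pos _).le h1 3
    _ ≤ 2.38691092 := by norm_num

lemma log2_ub : Real.log 2 ≤ 0.6931472 := by
  rw [Real.log_le_iff_le_exp (by norm_num)]
  have h1 : (2 : ℝ) ≤ ∑ i ∈ Finset.range 12, (0.6931472 : ℝ)^i / i.factorial := by
    simp [Finset.sum_range_succ, Nat.factorial]
    norm_num
  exact h1.trans (Real.sum_le_exp_of_nonneg (by norm_num) 12)

lemma log123_lb : (4.8121 : ℝ) ≤ Real.log 123 := by
  rw [Real.le_log_iff_exp_le (by norm_num)]
  have h : Real.exp 4.8121 = Real.exp 0.6015125 ^ 8 := by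
    rw [← Real.exp_nat_mul]; norm_num
  have h1 : Real.exp 0.6015125 ≤ 1.8248772 := by
    have h2 := expT (t := 0.6015125) (by norm_num) (by norm_num)
    norm_num at h2 ⊢
    linarith
  rw [h]
  calc Real.exp 0.6015125 ^ 8 ≤ 1.8248772 ^ 8 :=
        pow_le_pow_left₀ (Real.exp_pos _).le h1 8
    _ ≤ 123 := by norm_num

lemma log11_lb : (2.38691092 : ℝ) ≤ Real.log 11 := by
  rw [Real.le_log_iff_exp_le (by norm_num)]
  have h : Real.exp 2.38691092 = Real.exp 0.59672782 * Real.exp 0.59672764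
      * (Real.exp 0.59672782 * Real.exp 0.59672764) := by
    rw [show (2.38691092 : ℝ) = 0.59672782 + 0.59672764 + (0.59672782 + 0.59672764) by norm_num,
      Real.exp_add, Real.exp_add]
  have ha : Real.exp 0.59672782 ≤ 1.81616659 := by
    have h2 := expT (t := 0.59672782) (by norm_num) (by norm_num)
    norm_num at h2 ⊢
    linarith
  have hb : Real.exp 0.59672764 ≤ 1.81616626 := by
    have h2 := expT (t := 0.59672764) (by norm_num) (by norm_num)
    norm_num at h2 ⊢
    linarith
  have hab : Real.exp 0.59672782 * Real.exp 0.59672764 ≤ 1.81616659 * 1.81616626 :=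
    mul_le_mul ha hb (Real.exp_pos _).le (by norm_num)
  rw [h]
  calc Real.exp 0.59672782 * Real.exp 0.59672764
        * (Real.exp 0.59672782 * Real.exp 0.59672764)
      ≤ (1.81616659 * 1.81616626) * (1.81616659 * 1.81616626) := by
        apply mul_le_mul hab hab (by positivity) (by norm_num)
    _ ≤ 11 := by norm_num

/-- Interval step lemma. -/
lemma step {p E : ℝ} (hE : Real.exp p ≤ E) {l : ℝ} (hp : p ≤ l) (hq : l ≤ p + 1/4)
    (key : ∀ t : ℝ, 0 ≤ t → t ≤ 1/4 →
      E * (1 + t + t^2/2 + t^3/6 + 5*t^4/96) *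
        (0.6931472*(p+t) + 1.0102136 - 211/1400*(p+t)^2) ≤ 4.8121*(p+t)^2) :
    Real.exp l * (0.6931472*l + 1.0102136 - 211/1400*l^2) ≤ 4.8121*l^2 := by
  have ht0 : 0 ≤ l - p := by linarith
  have ht1 : l - p ≤ 1/4 := by linarith
  have h2 : Real.exp l = Real.exp p * Real.exp (l - p) := by
    rw [← Real.exp_add]; ring_nf
  have h3 := expP ht0 (by linarith : l - p ≤ 1)
  have hE0 : 0 ≤ E := (Real.exp_pos p).le.trans hE
  have h4 : Real.exp l ≤ E * (1 + (l-p) + (l-p)^2/2 + (l-p)^3/6 + 5*(l-p)^4/96) := by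
    rw [h2]
    exact mul_le_mul hE h3 (Real.exp_pos _).le hE0
  have hkey := key (l - p) ht0 ht1
  have hl : p + (l - p) = l := by ring
  rw [hl] at hkey
  rcases le_or_gt (0.6931472*l + 1.0102136 - 211/1400*l^2) 0 with hQ | hQ
  · have h0 : Real.exp l * (0.6931472*l + 1.0102136 - 211/1400*l^2) ≤ 0 :=
      mul_nonpos_of_nonneg_of_nonpos (Real.exp_pos l).le hQ
    nlinarith [sq_nonneg l]
  · have h5 : Real.exp l * (0.6931472*l + 1.0102136 - 211/1400*l^2) ≤
        E * (1 + (l-p) + (l-p)^2/2 + (l-p)^3/6 + 5*(l-p)^4/96) *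
          (0.6931472*l + 1.0102136 - 211/1400*l^2) :=
      mul_le_mul_of_nonneg_right h4 hQ.le
    linarith [h5, hkey]

set_option maxHeartbeats 1000000 in
lemma case0 {l : ℝ} (h1 : (0.87:ℝ) ≤ l) (h2 : l ≤ 1.12) :
    Real.exp l * (0.6931472*l + 1.0102136 - 211/1400*l^2) ≤ 4.8121*l^2 := by
  have hE : Real.exp (0.87 : ℝ) ≤ 2.38691092 := exp087
  exact step hE h1 (by linarith)
    (fun t ht0 ht1 => by nlinarith [sq_nonneg t, sq_nonneg (t - 1/8), mul_nonneg ht0 ht0, mul_nonneg (mul_nonneg ht0 ht0) ht0, mul_nonneg (mul_nonneg (mul_nonneg ht0 ht0) ht0) ht0, mul_nonneg ht0 (by linarith : (0:ℝ) ≤ 1/4 - t)])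

set_option maxHeartbeats 1000000 in
lemma case1 {l : ℝ} (h1 : (1:ℝ) ≤ l) (h2 : l ≤ 1.25) :
    Real.exp l * (0.6931472*l + 1.0102136 - 211/1400*l^2) ≤ 4.8121*l^2 := by
  have hE : Real.exp (1 : ℝ) ≤ 2.71828254 := by
    have hq := exp_qk 4
    norm_num at hq ⊢
    linarith
  exact step hE h1 (by linarith)
    (fun t ht0 ht1 => by nlinarith [sq_nonneg t, sq_nonneg (t - 1/8), mul_nonneg ht0 ht0, mul_nonneg (mul_nonneg ht0 ht0) ht0, mul_nonneg (mul_nonneg (mul_nonneg ht0 ht0) ht0) ht0, mul_nonneg ht0 (by linarith : (0:ℝ) ≤ 1/4 - t)])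

set_option maxHeartbeats 1000000 in
lemma case2 {l : ℝ} (h1 : (1.25:ℝ) ≤ l) (h2 : l ≤ 1.5) :
    Real.exp l * (0.6931472*l + 1.0102136 - 211/1400*l^2) ≤ 4.8121*l^2 := by
  have hE : Real.exp (1.25 : ℝ) ≤ 3.4903441 := by
    have hq := exp_qk 5
    norm_num at hq ⊢
    linarith
  exact step hE h1 (by linarith)
    (fun t ht0 ht1 => by nlinarith [sq_nonneg t, sq_nonneg (t - 1/8), mul_nonneg ht0 ht0, mul_nonneg (mul_nonneg ht0 ht0) ht0, mul_nonneg (mul_nonneg (mul_nonneg ht0 ht0) ht0) ht0, mul_nonneg ht0 (by linarith : (0:ℝ) ≤ 1/4 - t)])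

set_option maxHeartbeats 1000000 in
lemma case3 {l : ℝ} (h1 : (1.5:ℝ) ≤ l) (h2 : l ≤ 1.75) :
    Real.exp l * (0.6931472*l + 1.0102136 - 211/1400*l^2) ≤ 4.8121*l^2 := by
  have hE : Real.exp (1.5 : ℝ) ≤ 4.48169082 := by
    have hq := exp_qk 6
    norm_num at hq ⊢
    linarith
  exact step hE h1 (by linarith)
    (fun t ht0 ht1 => by nlinarith [sq_nonneg t, sq_nonneg (t - 1/8), mul_nonneg ht0 ht0, mul_nonneg (mul_nonneg ht0 ht0) ht0, mul_nonneg (mul_nonneg (mul_nonneg ht0 ht0) ht0) ht0, mul_nonneg ht0 (by linarith : (0:ℝ) ≤ 1/4 - t)])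

set_option maxHeartbeats 1000000 in
lemma case4 {l : ℝ} (h1 : (1.75:ℝ) ≤ l) (h2 : l ≤ 2) :
    Real.exp l * (0.6931472*l + 1.0102136 - 211/1400*l^2) ≤ 4.8121*l^2 := by
  have hE : Real.exp (1.75 : ℝ) ≤ 5.7546053 := by
    have hq := exp_qk 7
    norm_num at hq ⊢
    linarith
  exact step hE h1 (by linarith)
    (fun t ht0 ht1 => by nlinarith [sq_nonneg t, sq_nonneg (t - 1/8), mul_nonneg ht0 ht0, mul_nonneg (mul_nonneg ht0 ht0) ht0, mul_nonneg (mul_nonneg (mul_nonneg ht0 ht0) ht0) ht0, mul_nonneg ht0 (by linarith : (0:ℝ) ≤ 1/4 - t)])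

set_option maxHeartbeats 1000000 in
lemma case5 {l : ℝ} (h1 : (2:ℝ) ≤ l) (h2 : l ≤ 2.25) :
    Real.exp l * (0.6931472*l + 1.0102136 - 211/1400*l^2) ≤ 4.8121*l^2 := by
  have hE : Real.exp (2 : ℝ) ≤ 7.38905994 := by
    have hq := exp_qk 8
    norm_num at hq ⊢
    linarith
  exact step hE h1 (by linarith)
    (fun t ht0 ht1 => by nlinarith [sq_nonneg t, sq_nonneg (t - 1/8), mul_nonneg ht0 ht0, mul_nonneg (mul_nonneg ht0 ht0) ht0, mul_nonneg (mul_nonneg (mul_nonneg ht0 ht0) ht0) ht0, mul_nonneg ht0 (by linarith : (0:ℝ) ≤ 1/4 - t)])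

set_option maxHeartbeats 1000000 in
lemma case6 {l : ℝ} (h1 : (2.25:ℝ) ≤ l) (h2 : l ≤ 2.5) :
    Real.exp l * (0.6931472*l + 1.0102136 - 211/1400*l^2) ≤ 4.8121*l^2 := by
  have hE : Real.exp (2.25 : ℝ) ≤ 9.48774138 := by
    have hq := exp_qk 9
    norm_num at hq ⊢
    linarith
  exact step hE h1 (by linarith)
    (fun t ht0 ht1 => by nlinarith [sq_nonneg t, sq_nonneg (t - 1/8), mul_nonneg ht0 ht0, mul_nonneg (mul_nonneg ht0 ht0) ht0, mul_nonneg (mul_nonneg (mul_nonneg ht0 ht0) ht0) ht0, mul_nonneg ht0 (by linarith : (0:ℝ) ≤ 1/4 - t)])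

set_option maxHeartbeats 1000000 in
lemma case7 {l : ℝ} (h1 : (2.5:ℝ) ≤ l) (h2 : l ≤ 2.75) :
    Real.exp l * (0.6931472*l + 1.0102136 - 211/1400*l^2) ≤ 4.8121*l^2 := by
  have hE : Real.exp (2.5 : ℝ) ≤ 12.18250187 := by
    have hq := exp_qk 10
    norm_num at hq ⊢
    linarith
  exact step hE h1 (by linarith)
    (fun t ht0 ht1 => by nlinarith [sq_nonneg t, sq_nonneg (t - 1/8), mul_nonneg ht0 ht0, mul_nonneg (mul_nonneg ht0 ht0) ht0, mul_nonneg (mul_nonneg (mul_nonneg ht0 ht0) ht0) ht0, mul_nonneg ht0 (by linarith : (0:ℝ) ≤ 1/4 - t)])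

set_option maxHeartbeats 1000000 in
lemma case8 {l : ℝ} (h1 : (2.75:ℝ) ≤ l) (h2 : l ≤ 3) :
    Real.exp l * (0.6931472*l + 1.0102136 - 211/1400*l^2) ≤ 4.8121*l^2 := by
  have hE : Real.exp (2.75 : ℝ) ≤ 15.64264305 := by
    have hq := exp_qk 11
    norm_num at hq ⊢
    linarith
  exact step hE h1 (by linarith)
    (fun t ht0 ht1 => by nlinarith [sq_nonneg t, sq_nonneg (t - 1/8), mul_nonneg ht0 ht0, mul_nonneg (mul_nonneg ht0 ht0) ht0, mul_nonneg (mul_nonneg (mul_nonneg ht0 ht0) ht0) ht0, mul_nonneg ht0 (by linarith : (0:ℝ) ≤ 1/4 - t)])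

set_option maxHeartbeats 1000000 in
lemma case9 {l : ℝ} (h1 : (3:ℝ) ≤ l) (h2 : l ≤ 3.25) :
    Real.exp l * (0.6931472*l + 1.0102136 - 211/1400*l^2) ≤ 4.8121*l^2 := by
  have hE : Real.exp (3 : ℝ) ≤ 20.08555257 := by
    have hq := exp_qk 12
    norm_num at hq ⊢
    linarith
  exact step hE h1 (by linarith)
    (fun t ht0 ht1 => by nlinarith [sq_nonneg t, sq_nonneg (t - 1/8), mul_nonneg ht0 ht0, mul_nonneg (mul_nonneg ht0 ht0) ht0, mul_nonneg (mul_nonneg (mul_nonneg ht0 ht0) ht0) ht0, mul_nonneg ht0 (by linarith : (0:ℝ) ≤ 1/4 - t)])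

set_option maxHeartbeats 1000000 in
lemma case10 {l : ℝ} (h1 : (3.25:ℝ) ≤ l) (h2 : l ≤ 3.5) :
    Real.exp l * (0.6931472*l + 1.0102136 - 211/1400*l^2) ≤ 4.8121*l^2 := by
  have hE : Real.exp (3.25 : ℝ) ≤ 25.79036168 := by
    have hq := exp_qk 13
    norm_num at hq ⊢
    linarith
  exact step hE h1 (by linarith)
    (fun t ht0 ht1 => by nlinarith [sq_nonneg t, sq_nonneg (t - 1/8), mul_nonneg ht0 ht0, mul_nonneg (mul_nonneg ht0 ht0) ht0, mul_nonneg (mul_nonneg (mul_nonneg ht0 ht0) ht0) ht0, mul_nonneg ht0 (by linarith : (0:ℝ) ≤ 1/4 - t)])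

set_option maxHeartbeats 1000000 in
lemma case11 {l : ℝ} (h1 : (3.5:ℝ) ≤ l) (h2 : l ≤ 3.75) :
    Real.exp l * (0.6931472*l + 1.0102136 - 211/1400*l^2) ≤ 4.8121*l^2 := by
  have hE : Real.exp (3.5 : ℝ) ≤ 33.11548205 := by
    have hq := exp_qk 14
    norm_num at hq ⊢
    linarith
  exact step hE h1 (by linarith)
    (fun t ht0 ht1 => by nlinarith [sq_nonneg t, sq_nonneg (t - 1/8), mul_nonneg ht0 ht0, mul_nonneg (mul_nonneg ht0 ht0) ht0, mul_nonneg (mul_nonneg (mul_nonneg ht0 ht0) ht0) ht0, mul_nonneg ht0 (by linarith : (0:ℝ) ≤ 1/4 - t)])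

set_option maxHeartbeats 1000000 in
lemma case12 {l : ℝ} (h1 : (3.75:ℝ) ≤ l) (h2 : l ≤ 4) :
    Real.exp l * (0.6931472*l + 1.0102136 - 211/1400*l^2) ≤ 4.8121*l^2 := by
  have hE : Real.exp (3.75 : ℝ) ≤ 42.52112339 := by
    have hq := exp_qk 15
    norm_num at hq ⊢
    linarith
  exact step hE h1 (by linarith)
    (fun t ht0 ht1 => by nlinarith [sq_nonneg t, sq_nonneg (t - 1/8), mul_nonneg ht0 ht0, mul_nonneg (mul_nonneg ht0 ht0) ht0, mul_nonneg (mul_nonneg (mul_nonneg ht0 ht0) ht0) ht0, mul_nonneg ht0 (by linarith : (0:ℝ) ≤ 1/4 - t)])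

set_option maxHeartbeats 1000000 in
lemma case13 {l : ℝ} (h1 : (4:ℝ) ≤ l) (h2 : l ≤ 4.25) :
    Real.exp l * (0.6931472*l + 1.0102136 - 211/1400*l^2) ≤ 4.8121*l^2 := by
  have hE : Real.exp (4 : ℝ) ≤ 54.59820672 := by
    have hq := exp_qk 16
    norm_num at hq ⊢
    linarith
  exact step hE h1 (by linarith)
    (fun t ht0 ht1 => by nlinarith [sq_nonneg t, sq_nonneg (t - 1/8), mul_nonneg ht0 ht0, mul_nonneg (mul_nonneg ht0 ht0) ht0, mul_nonneg (mul_nonneg (mul_nonneg ht0 ht0) ht0) ht0, mul_nonneg ht0 (by linarith : (0:ℝ) ≤ 1/4 - t)])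

set_option maxHeartbeats 1000000 in
lemma case14 {l : ℝ} (h1 : (4.25:ℝ) ≤ l) (h2 : l ≤ 4.5) :
    Real.exp l * (0.6931472*l + 1.0102136 - 211/1400*l^2) ≤ 4.8121*l^2 := by
  have hE : Real.exp (4.25 : ℝ) ≤ 70.10548968 := by
    have hq := exp_qk 17
    norm_num at hq ⊢
    linarith
  exact step hE h1 (by linarith)
    (fun t ht0 ht1 => by nlinarith [sq_nonneg t, sq_nonneg (t - 1/8), mul_nonneg ht0 ht0, mul_nonneg (mul_nonneg ht0 ht0) ht0, mul_nonneg (mul_nonneg (mul_nonneg ht0 ht0) ht0) ht0, mul_nonneg ht0 (by linarith : (0:ℝ) ≤ 1/4 - t)])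

set_option maxHeartbeats 1000000 in
lemma case15 {l : ℝ} (h1 : (4.5:ℝ) ≤ l) (h2 : l ≤ 4.75) :
    Real.exp l * (0.6931472*l + 1.0102136 - 211/1400*l^2) ≤ 4.8121*l^2 := by
  have hE : Real.exp (4.5 : ℝ) ≤ 90.01723644 := by
    have hq := exp_qk 18
    norm_num at hq ⊢
    linarith
  exact step hE h1 (by linarith)
    (fun t ht0 ht1 => by nlinarith [sq_nonneg t, sq_nonneg (t - 1/8), mul_nonneg ht0 ht0, mul_nonneg (mul_nonneg ht0 ht0) ht0, mul_nonneg (mul_nonneg (mul_nonneg ht0 ht0) ht0) ht0, mul_nonneg ht0 (by linarith : (0:ℝ) ≤ 1/4 - t)])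

set_option maxHeartbeats 1000000 in
lemma case16 {l : ℝ} (h1 : (4.75:ℝ) ≤ l) (h2 : l ≤ 5) :
    Real.exp l * (0.6931472*l + 1.0102136 - 211/1400*l^2) ≤ 4.8121*l^2 := by
  have hE : Real.exp (4.75 : ℝ) ≤ 115.58442702 := by
    have hq := exp_qk 19
    norm_num at hq ⊢
    linarith
  exact step hE h1 (by linarith)
    (fun t ht0 ht1 => by nlinarith [sq_nonneg t, sq_nonneg (t - 1/8), mul_nonneg ht0 ht0, mul_nonneg (mul_nonneg ht0 ht0) ht0, mul_nonneg (mul_nonneg (mul_nonneg ht0 ht0) ht0) ht0, mul_nonneg ht0 (by linarith : (0:ℝ) ≤ 1/4 - t)])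

set_option maxHeartbeats 1000000 in
lemma case17 {l : ℝ} (h1 : (5:ℝ) ≤ l) (h2 : l ≤ 5.25) :
    Real.exp l * (0.6931472*l + 1.0102136 - 211/1400*l^2) ≤ 4.8121*l^2 := by
  have hE : Real.exp (5 : ℝ) ≤ 148.4133517 := by
    have hq := exp_qk 20
    norm_num at hq ⊢
    linarith
  exact step hE h1 (by linarith)
    (fun t ht0 ht1 => by nlinarith [sq_nonneg t, sq_nonneg (t - 1/8), mul_nonneg ht0 ht0, mul_nonneg (mul_nonneg ht0 ht0) ht0, mul_nonneg (mul_nonneg (mul_nonneg ht0 ht0) ht0) ht0, mul_nonneg ht0 (by linarith : (0:ℝ) ≤ 1/4 - t)])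

set_option maxHeartbeats 1000000 in
lemma case18 {l : ℝ} (h1 : (5.25:ℝ) ≤ l) (h2 : l ≤ 5.5) :
    Real.exp l * (0.6931472*l + 1.0102136 - 211/1400*l^2) ≤ 4.8121*l^2 := by
  have hE : Real.exp (5.25 : ℝ) ≤ 190.56652812 := by
    have hq := exp_qk 21
    norm_num at hq ⊢
    linarith
  exact step hE h1 (by linarith)
    (fun t ht0 ht1 => by nlinarith [sq_nonneg t, sq_nonneg (t - 1/8), mul_nonneg ht0 ht0, mul_nonneg (mul_nonneg ht0 ht0) ht0, mul_nonneg (mul_nonneg (mul_nonneg ht0 ht0) ht0) ht0, mul_nonneg ht0 (by linarith : (0:ℝ) ≤ 1/4 - t)])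

set_option maxHeartbeats 1000000 in
lemma case19 {l : ℝ} (h1 : (5.5:ℝ) ≤ l) (h2 : l ≤ 5.75) :
    Real.exp l * (0.6931472*l + 1.0102136 - 211/1400*l^2) ≤ 4.8121*l^2 := by
  have hE : Real.exp (5.5 : ℝ) ≤ 244.69228155 := by
    have hq := exp_qk 22
    norm_num at hq ⊢
    linarith
  exact step hE h1 (by linarith)
    (fun t ht0 ht1 => by nlinarith [sq_nonneg t, sq_nonneg (t - 1/8), mul_nonneg ht0 ht0, mul_nonneg (mul_nonneg ht0 ht0) ht0, mul_nonneg (mul_nonneg (mul_nonneg ht0 ht0) ht0) ht0, mul_nonneg ht0 (by linarith : (0:ℝ) ≤ 1/4 - t)])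

set_option maxHeartbeats 1000000 in
lemma case20 {l : ℝ} (h1 : (5.75:ℝ) ≤ l) (h2 : l ≤ 6) :
    Real.exp l * (0.6931472*l + 1.0102136 - 211/1400*l^2) ≤ 4.8121*l^2 := by
  have hE : Real.exp (5.75 : ℝ) ≤ 314.19112917 := by
    have hq := exp_qk 23
    norm_num at hq ⊢
    linarith
  exact step hE h1 (by linarith)
    (fun t ht0 ht1 => by nlinarith [sq_nonneg t, sq_nonneg (t - 1/8), mul_nonneg ht0 ht0, mul_nonneg (mul_nonneg ht0 ht0) ht0, mul_nonneg (mul_nonneg (mul_nonneg ht0 ht0) ht0) ht0, mul_nonneg ht0 (by linarith : (0:ℝ) ≤ 1/4 - t)])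

set_option maxHeartbeats 1000000 in
lemma keyF {l : ℝ} (hl : (0.87 : ℝ) ≤ l) :
    Real.exp l * (0.6931472*l + 1.0102136 - 211/1400*l^2) ≤ 4.8121*l^2 := by
  rcases le_or_gt 6 l with h6 | h6
  · have hQ : 0.6931472*l + 1.0102136 - 211/1400*l^2 ≤ 0 := by nlinarith
    have h0 : Real.exp l * (0.6931472*l + 1.0102136 - 211/1400*l^2) ≤ 0 :=
      mul_nonpos_of_nonneg_of_nonpos (Real.exp_pos l).le hQ
    nlinarith [sq_nonneg l]
  rcases le_or_gt (5.75 : ℝ) l with h | h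
  · exact case20 h (by linarith)
  rcases le_or_gt (5.5 : ℝ) l with h | h
  · exact case19 h (by linarith)
  rcases le_or_gt (5.25 : ℝ) l with h | h
  · exact case18 h (by linarith)
  rcases le_or_gt (5 : ℝ) l with h | h
  · exact case17 h (by linarith)
  rcases le_or_gt (4.75 : ℝ) l with h | h
  · exact case16 h (by linarith)
  rcases le_or_gt (4.5 : ℝ) l with h | h
  · exact case15 h (by linarith)
  rcases le_or_gt (4.25 : ℝ) l with h | h
  · exact case14 h (by linarith)
  rcases le_or_gt (4 : ℝ) l with h | h
  · exact case13 h (by linarith)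
  rcases le_or_gt (3.75 : ℝ) l with h | h
  · exact case12 h (by linarith)
  rcases le_or_gt (3.5 : ℝ) l with h | h
  · exact case11 h (by linarith)
  rcases le_or_gt (3.25 : ℝ) l with h | h
  · exact case10 h (by linarith)
  rcases le_or_gt (3 : ℝ) l with h | h
  · exact case9 h (by linarith)
  rcases le_or_gt (2.75 : ℝ) l with h | h
  · exact case8 h (by linarith)
  rcases le_or_gt (2.5 : ℝ) l with h | h
  · exact case7 h (by linarith)
  rcases le_or_gt (2.25 : ℝ) l with h | h
  · exact case6 h (by linarith)
  rcases le_or_gt (2 : ℝ) l with h | h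
  · exact case5 h (by linarith)
  rcases le_or_gt (1.75 : ℝ) l with h | h
  · exact case4 h (by linarith)
  rcases le_or_gt (1.5 : ℝ) l with h | h
  · exact case3 h (by linarith)
  rcases le_or_gt (1.25 : ℝ) l with h | h
  · exact case2 h (by linarith)
  rcases le_or_gt (1 : ℝ) l with h | h
  · exact case1 h (by linarith)
  exact case0 hl (by linarith)

lemma keyX {x : ℝ} (hx : Real.log 11 ≤ x) :
    Real.log 2 * (x / Real.log x + 1.45743 * x / (Real.log x)^2) ≤
      Real.log 123 + 211/1400 * x := by
  have h11 : (2.38691092 : ℝ) ≤ x := log11_lb.trans hx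
  have hx0 : (0:ℝ) < x := by linarith
  have hl87 : (0.87 : ℝ) ≤ Real.log x := by
    rw [Real.le_log_iff_exp_le hx0]
    exact exp087.trans (by linarith)
  set l := Real.log x with hldef
  have hl0 : (0:ℝ) < l := by linarith
  have hxl : x = Real.exp l := (Real.exp_log hx0).symm
  have hF := keyF hl87
  rw [← hxl] at hF
  have hb := log2_ub
  have hb0 : (0:ℝ) < Real.log 2 := Real.log_pos (by norm_num)
  have hK := log123_lb
  have hl2 : (0:ℝ) < l^2 := by positivity
  have key2 : Real.log 2 * (x / l + 1.45743 * x / l^2) ≤ 4.8121 + 211/1400 * x := by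
    rw [div_add_div _ _ (by positivity) (by positivity), ← mul_div_assoc,
      div_le_iff₀ (by positivity : (0:ℝ) < l * l^2)]
    have e1 : Real.log 2 * (x * l^2 + l * (1.45743 * x)) ≤
        0.6931472 * (x * l^2 + l * (1.45743 * x)) :=
      mul_le_mul_of_nonneg_right hb (by positivity)
    nlinarith [e1, mul_pos hx0 hl0, mul_pos (mul_pos hx0 hl0) hl0,
      mul_le_mul_of_nonneg_right hF hl0.le]
  linarith [key2, hK]

/-- For every integer `n ≥ 11`,
`2^(log n/log log n + 1.45743·log n/(log log n)²) ≤ 123·n^(211/1400)`. -/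
theorem two_pow_omega_bound (n : ℕ) (hn : 11 ≤ n) :
    (2 : ℝ) ^ (Real.log n / Real.log (Real.log n) +
        1.45743 * Real.log n / (Real.log (Real.log n)) ^ 2) ≤
      123 * (n : ℝ) ^ ((211 : ℝ) / 1400) := by
  have hn0 : (0:ℝ) < n := by positivity
  have hn11 : (11:ℝ) ≤ n := by exact_mod_cast hn
  have hlog : Real.log 11 ≤ Real.log n := Real.log_le_log (by norm_num) hn11
  have hkey := keyX hlog
  have h2 : (2:ℝ) ^ (Real.log n / Real.log (Real.log n) +
        1.45743 * Real.log n / (Real.log (Real.log n)) ^ 2)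
      = Real.exp (Real.log 2 * (Real.log n / Real.log (Real.log n) +
        1.45743 * Real.log n / (Real.log (Real.log n)) ^ 2)) := by
    rw [Real.rpow_def_of_pos (by norm_num)]
  have h3 : (123 : ℝ) * (n : ℝ) ^ ((211 : ℝ) / 1400)
      = Real.exp (Real.log 123 + 211/1400 * Real.log n) := by
    rw [Real.exp_add, Real.rpow_def_of_pos hn0, Real.exp_log (by norm_num : (0:ℝ) < 123)]
    ring_nf
  rw [h2, h3]
  exact Real.exp_le_exp.2 hkey
end

section
/- Let m ≥ 5 and a be positive integers, and let v ≥ 2 be an integer, δ ∈ {0,1}, and 1 ≤ w₀ ≤ 8^δ. Then the number of integers t with 1 ≤ t ≤ v that can be written as (a·p_m(x) − w₀)/8^δ for some integer x is at most 2·√(2·8^δ·(v+1) + 1/4), where p_m(x) = ((m−2)x² − (m−4)x)/2. -/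
open Classical in
private noncomputable def polyPick (m a δ w₀ : ℕ) (t : ℤ) : ℤ :=
  if h : ∃ x : ℤ, 2 * ((8 : ℤ) ^ δ * t + w₀) =
      a * (((m : ℤ) - 2) * x ^ 2 - ((m : ℤ) - 4) * x) then h.choose else 0

open Classical in
private theorem polyPick_spec {m a δ w₀ : ℕ} {t : ℤ}
    (h : ∃ x : ℤ, 2 * ((8 : ℤ) ^ δ * t + w₀) =
      a * (((m : ℤ) - 2) * x ^ 2 - ((m : ℤ) - 4) * x)) :
    2 * ((8 : ℤ) ^ δ * t + w₀) =
      a * (((m : ℤ) - 2) * (polyPick m a δ w₀ t) ^ 2 - ((m : ℤ) - 4) * (polyPick m a δ w₀ t)) := by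
  unfold polyPick
  rw [dif_pos h]
  exact h.choose_spec

set_option maxHeartbeats 1000000 in
open Classical in
/-- The number of `t ∈ {1,…,v}` of the form `(a·p_m(x) − w₀)/8^δ` is at most
`2·√(2·8^δ·(v+1) + 1/4)`. -/
theorem count_polygonal_values (m a : ℕ) (hm : 5 ≤ m) (ha : 0 < a)
    (v : ℕ) (hv : 2 ≤ v) (δ : ℕ) (hδ : δ ≤ 1) (w₀ : ℕ) (hw : 1 ≤ w₀) (hw8 : w₀ ≤ 8 ^ δ) :
    (((Finset.Icc 1 v).filter (fun t => ∃ x : ℤ,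
        2 * ((8 : ℤ) ^ δ * t + w₀) =
          a * (((m : ℤ) - 2) * x ^ 2 - ((m : ℤ) - 4) * x))).card : ℝ) ≤
      2 * Real.sqrt (2 * 8 ^ δ * ((v : ℝ) + 1) + 1 / 4) := by
  classical
  set B : ℕ := 8 ^ δ * (v + 1) with hB
  set N : ℕ := Nat.sqrt B with hN
  set f : ℤ → ℤ := polyPick m a δ w₀ with hf
  set S := (Finset.Icc 1 v).filter (fun t => ∃ x : ℤ,
      2 * ((8 : ℤ) ^ δ * t + w₀) =
        a * (((m : ℤ) - 2) * x ^ 2 - ((m : ℤ) - 4) * x)) with hS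
  have hmemS : ∀ t ∈ S, ((1:ℤ) ≤ t ∧ t ≤ v) ∧
      2 * ((8 : ℤ) ^ δ * t + w₀) =
        a * (((m : ℤ) - 2) * (f t) ^ 2 - ((m : ℤ) - 4) * (f t)) := by
    intro t ht
    rw [hS, Finset.mem_filter] at ht
    obtain ⟨h1, h2⟩ := ht
    simp at h1
    obtain ⟨n, ⟨hn1, hn2⟩, rfl⟩ := h1
    exact ⟨⟨by exact_mod_cast hn1, by exact_mod_cast hn2⟩, polyPick_spec h2⟩
  have h8 : (1 : ℤ) ≤ 8 ^ δ := one_le_pow₀ (by norm_num)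
  have hbound : ∀ t ∈ S, f t ∈ (Finset.Icc (-(N : ℤ)) (N : ℤ)).erase 0 := by
    intro t ht
    obtain ⟨⟨ht1, htv⟩, hp⟩ := hmemS t ht
    set x := f t with hx
    clear_value x
    have hw1 : (1 : ℤ) ≤ (w₀ : ℤ) := by exact_mod_cast hw
    have hw8' : (w₀ : ℤ) ≤ 8 ^ δ := by exact_mod_cast hw8
    have ha1 : (1 : ℤ) ≤ (a : ℤ) := by exact_mod_cast ha
    have hm5 : (5 : ℤ) ≤ (m : ℤ) := by exact_mod_cast hm
    have hxx : (0 : ℤ) ≤ x * (x - 1) := by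
      rcases le_or_gt x 0 with h | h
      · nlinarith
      · nlinarith
    have hVx : 2 * x ^ 2 ≤ ((m : ℤ) - 2) * x ^ 2 - ((m : ℤ) - 4) * x := by nlinarith
    have haV : 2 * x ^ 2 ≤ (a : ℤ) * (((m : ℤ) - 2) * x ^ 2 - ((m : ℤ) - 4) * x) := by
      nlinarith [sq_nonneg x]
    have hxB : x ^ 2 ≤ (B : ℤ) := by
      have hBe : (B : ℤ) = 8 ^ δ * ((v : ℤ) + 1) := by rw [hB]; push_cast; ring
      nlinarith
    have hx0 : x ≠ 0 := by
      intro h0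
      rw [h0] at hp
      norm_num at hp
      have h1 : (1:ℤ) * 1 ≤ 8 ^ δ * t := mul_le_mul h8 ht1 (by norm_num) (by positivity)
      linarith
    have hnat : x.natAbs ≤ N := by
      rw [hN, Nat.le_sqrt]
      have h2 : ((x.natAbs * x.natAbs : ℕ) : ℤ) ≤ (B : ℤ) := by
        rw [Int.natAbs_mul_self]; nlinarith
      exact_mod_cast h2
    have habs : |x| ≤ (N : ℤ) := by
      rw [Int.abs_eq_natAbs]; exact_mod_cast hnat
    rw [Finset.mem_erase, Finset.mem_Icc]
    exact ⟨hx0, abs_le.mp habs⟩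
  have hinj : Set.InjOn f S := by
    intro t ht s hs hfts
    obtain ⟨-, hpt⟩ := hmemS t ht
    obtain ⟨-, hps⟩ := hmemS s hs
    rw [hfts] at hpt
    have heq : ((8:ℤ)^δ) * t = ((8:ℤ)^δ) * s := by linarith [hpt.trans hps.symm]
    have h8pos : (0:ℤ) < 8 ^ δ := by positivity
    exact mul_left_cancel₀ (ne_of_gt h8pos) heq
  have hcard : S.card ≤ 2 * N := by
    have hle := Finset.card_le_card_of_injOn f hbound hinj
    have hmem : (0 : ℤ) ∈ Finset.Icc (-(N : ℤ)) (N : ℤ) := by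
      rw [Finset.mem_Icc]; constructor <;> simp
    rw [Finset.card_erase_of_mem hmem, Int.card_Icc] at hle
    have hle' : S.card ≤ ((N : ℤ) + 1 - -(N : ℤ)).toNat - 1 := hle
    omega
  have hNB : (N : ℝ) ^ 2 ≤ (B : ℝ) := by
    have h1 : N ^ 2 ≤ B := by rw [hN]; exact Nat.sqrt_le' B
    exact_mod_cast h1
  have hBr : (B : ℝ) = 8 ^ δ * ((v : ℝ) + 1) := by rw [hB]; push_cast; ring
  have hsq : (N : ℝ) ≤ Real.sqrt (2 * 8 ^ δ * ((v : ℝ) + 1) + 1 / 4) := by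
    rw [show (2 : ℝ) * 8 ^ δ * ((v : ℝ) + 1) + 1 / 4 = 2 * (B : ℝ) + 1 / 4 by rw [hBr]; ring]
    calc (N : ℝ) = Real.sqrt ((N : ℝ) ^ 2) := (Real.sqrt_sq (by positivity)).symm
      _ ≤ Real.sqrt (2 * (B : ℝ) + 1 / 4) := Real.sqrt_le_sqrt (by nlinarith)
  calc (S.card : ℝ) ≤ ((2 * N : ℕ) : ℝ) := by exact_mod_cast hcard
    _ = 2 * (N : ℝ) := by push_cast; ring
    _ ≤ 2 * Real.sqrt (2 * 8 ^ δ * ((v : ℝ) + 1) + 1 / 4) := by linarith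
end
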